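/- Let Φ : X → ℝ^d be bounded and measurable, a : ℝ → ℝ continuously differentiable, p a probability measure on X × ℝ with E|y| < ∞, and γ > 0, λ > 0. Suppose π is a probability measure on ℝ^d with finite first moment that is invariant for the regularized SGD recursion: the pushforward of π ⊗ p under (θ,(x,y)) ↦ θ - γ[ (a'(⟨Φ(x),θ⟩) - y)Φ(x) + λθ ] equals π, and suppose (θ,(x,y)) ↦ (a'(⟨Φ(x),θ⟩) - y)Φ(x) + λθ is integrable under π ⊗ p. Then, with μ**(x) = E[y|x] and μ̄̄(x) = ∫ a'(⟨Φ(x),θ⟩) dπ(θ), one has E_{p_x}[ (μ**(x) - μ̄̄(x)) Φ(x) ] = λ ∫ θ dπ(θ). -/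

import Mathlib

open MeasureTheory
open scoped RealInnerProductSpace

/-! At stationarity `θ` and `θ - γ G(θ, z)` have the same law, so the mean stochastic gradient
`E_{π⊗p}[G] = E[(a'(⟨Φ(x),θ⟩) - y)Φ(x)] + λ E_π[θ]` vanishes. Conditioning on `x` replaces `y` by
`μ**(x)`, and Fubini turns `E[a'(⟨Φ(x),θ⟩)Φ(x)]` into `E_{p_x}[μ̄̄(x)Φ(x)]`. -/

namespace MeasureTheory

theorem integral_eq_zero_of_map_sub_smul_eq_map {α E : Type*} [MeasurableSpace α]
    [NormedAddCommGroup E] [NormedSpace ℝ E] [MeasurableSpace E] [BorelSpace E]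
    [SecondCountableTopology E] {μ : Measure α} {f g : α → E} {γ : ℝ} (hγ : γ ≠ 0)
    (hf : Integrable f μ) (hg : Integrable g μ)
    (hmap : μ.map (fun z => f z - γ • g z) = μ.map f) :
    ∫ z, g z ∂μ = 0 := by
  have integral_id_map {φ : α → E} (hφ : AEMeasurable φ μ) : ∫ y, y ∂(μ.map φ) = ∫ z, φ z ∂μ :=
    integral_map hφ aestronglyMeasurable_id
  have hγg : Integrable (fun z => γ • g z) μ := hg.smul γ
  have hmean : ∫ z, f z - γ • g z ∂μ = ∫ z, f z ∂μ := by
    rw [← integral_id_map (φ := fun z => f z - γ • g z) (hf.sub hγg).aemeasurable, hmap,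
      integral_id_map hf.aemeasurable]
  rw [integral_sub hf hγg, integral_smul, sub_eq_self, smul_eq_zero] at hmean
  exact hmean.resolve_left hγ

theorem integral_smul_eq_integral_condExp_smul {Ω E : Type*} {m mΩ : MeasurableSpace Ω}
    [NormedAddCommGroup E] [NormedSpace ℝ E] [CompleteSpace E] {μ : Measure Ω} (hm : m ≤ mΩ)
    [SigmaFinite (μ.trim hm)] {f : Ω → ℝ} {g : Ω → E} (hf : Integrable f μ)
    (hfg : Integrable (f • g) μ) (hg : AEStronglyMeasurable[m] g μ) :
    ∫ ω, f ω • g ω ∂μ = ∫ ω, μ[f | m] ω • g ω ∂μ :=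
  calc ∫ ω, f ω • g ω ∂μ = ∫ ω, μ[f • g | m] ω ∂μ := (integral_condExp hm).symm
    _ = ∫ ω, μ[f | m] ω • g ω ∂μ :=
      integral_congr_ae (condExp_smul_of_aestronglyMeasurable_right hf hfg hg)

section Fubini

variable {α β F : Type*} [MeasurableSpace α] [MeasurableSpace β] {μ : Measure α} {ν : Measure β}
  [SFinite μ] [SFinite ν] [NormedAddCommGroup F] [NormedSpace ℝ F] [CompleteSpace F]
  {h : α × β → ℝ} {v : β → F}

theorem Integrable.integral_prod_right_smul (hint : Integrable (fun q => h q • v q.2) (μ.prod ν)) :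
    Integrable (fun b => (∫ a, h (a, b) ∂μ) • v b) ν :=
  hint.integral_prod_right.congr <|
    ae_of_all _ fun b => integral_smul_const (fun a => h (a, b)) (v b)

theorem integral_prod_smul_comp_snd (hint : Integrable (fun q => h q • v q.2) (μ.prod ν)) :
    ∫ q, h q • v q.2 ∂μ.prod ν = ∫ b, (∫ a, h (a, b) ∂μ) • v b ∂ν := by
  simp_rw [integral_prod_symm _ hint, integral_smul_const]

end Fubini

end MeasureTheory

section RegularizedSGD

variable {X : Type*} [MeasurableSpace X] {d : ℕ} {p : Measure (X × ℝ)}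
  {π : Measure (EuclideanSpace ℝ (Fin d))} {Φ : X → EuclideanSpace ℝ (Fin d)} {a : ℝ → ℝ}

theorem integral_regularizedGradient_eq [IsProbabilityMeasure p] [IsProbabilityMeasure π]
    {lam : ℝ}
    (hpredΦ : Integrable (fun q : EuclideanSpace ℝ (Fin d) × (X × ℝ) =>
      deriv a ⟪Φ q.2.1, q.1⟫ • Φ q.2.1) (π.prod p))
    (hyΦ : Integrable (fun z : X × ℝ => z.2 • Φ z.1) p)
    (hmoment : Integrable (fun θ : EuclideanSpace ℝ (Fin d) => θ) π) :
    ∫ q : EuclideanSpace ℝ (Fin d) × (X × ℝ),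
        (deriv a ⟪Φ q.2.1, q.1⟫ - q.2.2) • Φ q.2.1 + lam • q.1 ∂(π.prod p) =
      ∫ q : EuclideanSpace ℝ (Fin d) × (X × ℝ), deriv a ⟪Φ q.2.1, q.1⟫ • Φ q.2.1 ∂(π.prod p)
        - ∫ z, z.2 • Φ z.1 ∂p + lam • ∫ θ, θ ∂π := by
  have hresp := hyΦ.comp_snd π
  simp_rw [sub_smul]
  rw [integral_add (by exact hpredΦ.sub hresp) (by exact (hmoment.comp_fst p).smul lam),
    integral_sub hpredΦ hresp, integral_smul, integral_fun_snd (fun z : X × ℝ => z.2 • Φ z.1),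
    integral_fun_fst (fun θ : EuclideanSpace ℝ (Fin d) => θ), probReal_univ, probReal_univ,
    one_smul, one_smul]

theorem integral_condMean_smul_eq_integral_smul [IsFiniteMeasure p] (hΦ_meas : Measurable Φ)
    (hy : Integrable (fun z : X × ℝ => z.2) p) (hyΦ : Integrable (fun z : X × ℝ => z.2 • Φ z.1) p)
    {μss : X → ℝ} (hμss : (fun z : X × ℝ => μss z.1) =ᵐ[p]
      p[(fun z : X × ℝ => z.2) | MeasurableSpace.comap (Prod.fst : X × ℝ → X) inferInstance]) :
    ∫ z, μss z.1 • Φ z.1 ∂p = ∫ z, z.2 • Φ z.1 ∂p := by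
  have hΦ_fst : StronglyMeasurable[.comap Prod.fst inferInstance] fun z : X × ℝ => Φ z.1 :=
    (hΦ_meas.comp (comap_measurable Prod.fst)).stronglyMeasurable
  rw [integral_smul_eq_integral_condExp_smul measurable_fst.comap_le hy hyΦ
    hΦ_fst.aestronglyMeasurable]
  exact integral_congr_ae (hμss.mono fun z hz => congrArg (· • Φ z.1) hz)

theorem measurable_averagedPrediction [SFinite π] (hΦ_meas : Measurable Φ) :
    Measurable fun x => ∫ θ, deriv a ⟪Φ x, θ⟫ ∂π :=
  ((measurable_deriv a).comp ((hΦ_meas.comp measurable_fst).inner measurable_snd)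
    ).stronglyMeasurable.integral_prod_right'.measurable

end RegularizedSGD

theorem regularized_stationary_averaged_prediction_identity_general
    {X : Type*} [MeasurableSpace X] {d : ℕ}
    (p : Measure (X × ℝ)) [IsProbabilityMeasure p]
    (hy : Integrable (fun q : X × ℝ => q.2) p)
    (Φ : X → EuclideanSpace ℝ (Fin d)) (hΦ_meas : Measurable Φ)
    (hΦ_bdd : ∃ C : ℝ, ∀ x, ‖Φ x‖ ≤ C)
    (a : ℝ → ℝ)
    (γ lam : ℝ) (hγ : 0 < γ)
    (π : Measure (EuclideanSpace ℝ (Fin d))) [IsProbabilityMeasure π]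
    (hmoment : Integrable (fun θ : EuclideanSpace ℝ (Fin d) => θ) π)
    (hgrad_int : Integrable
      (fun q : EuclideanSpace ℝ (Fin d) × (X × ℝ) =>
        (deriv a ⟪Φ q.2.1, q.1⟫ - q.2.2) • Φ q.2.1 + lam • q.1) (π.prod p))
    (hinv : Measure.map
      (fun q : EuclideanSpace ℝ (Fin d) × (X × ℝ) =>
        q.1 - γ • ((deriv a ⟪Φ q.2.1, q.1⟫ - q.2.2) • Φ q.2.1 + lam • q.1)) (π.prod p) = π)
    (μss : X → ℝ) (hμss_meas : Measurable μss)
    (hμss : (fun q : X × ℝ => μss q.1) =ᵐ[p]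
      p[(fun q : X × ℝ => q.2) | MeasurableSpace.comap (Prod.fst : X × ℝ → X) inferInstance])
    (μbb : X → ℝ) (hμbb : ∀ x, μbb x = ∫ θ, deriv a ⟪Φ x, θ⟫ ∂π) :
    ∫ x, (μss x - μbb x) • Φ x ∂(p.map Prod.fst) = lam • ∫ θ, θ ∂π := by
  obtain ⟨C, hC⟩ := hΦ_bdd
  have hsmulΦ {f : X × ℝ → ℝ} (hf : Integrable f p) : Integrable (fun z => f z • Φ z.1) p :=
    hf.smul_bdd C (hΦ_meas.comp measurable_fst).aestronglyMeasurable <|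
      ae_of_all _ fun z => hC z.1
  have hθ := hmoment.comp_fst p
  have hpredΦ : Integrable (fun q : EuclideanSpace ℝ (Fin d) × (X × ℝ) =>
      deriv a ⟪Φ q.2.1, q.1⟫ • Φ q.2.1) (π.prod p) := by
    refine ((hgrad_int.sub (hθ.smul lam)).add ((hsmulΦ hy).comp_snd π)).congr
      (ae_of_all _ fun q => ?_)
    simp [sub_smul]
  have hmean := integral_eq_zero_of_map_sub_smul_eq_map hγ.ne' hθ hgrad_int
    (by rw [hinv, Measure.map_fst_prod]; simp)
  rw [integral_regularizedGradient_eq hpredΦ (hsmulΦ hy) hmoment] at hmean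
  have hμbb_meas : Measurable μbb := funext hμbb ▸ measurable_averagedPrediction hΦ_meas
  rw [integral_map (f := fun x => (μss x - μbb x) • Φ x) measurable_fst.aemeasurable
    ((hμss_meas.sub hμbb_meas).smul hΦ_meas).aestronglyMeasurable]
  simp_rw [sub_smul, hμbb]
  rw [integral_sub (hsmulΦ (integrable_condExp.congr hμss.symm)) (hpredΦ.integral_prod_right_smul
      (h := fun q : EuclideanSpace ℝ (Fin d) × (X × ℝ) => deriv a ⟪Φ q.2.1, q.1⟫)),
    ← integral_prod_smul_comp_snd
      (h := fun q : EuclideanSpace ℝ (Fin d) × (X × ℝ) => deriv a ⟪Φ q.2.1, q.1⟫) hpredΦ,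
    integral_condMean_smul_eq_integral_smul hΦ_meas hy (hsmulΦ hy) hμss]
  linear_combination (norm := module) -hmean

/-- For regularized constant step-size SGD
`θ_n = θ_{n-1} - γ[(a'(⟨Φ(x_n),θ_{n-1}⟩) - y_n)Φ(x_n) + λθ_{n-1}]`, any invariant
probability measure `π` satisfies
`E_{p_x}[(μ**(x) - μ̄̄(x))Φ(x)] = λ ∫ θ dπ(θ)`, where `μ̄̄(x) = ∫ a'(⟨Φ(x),θ⟩) dπ(θ)` is
the averaged prediction and `μ**(x) = E[y|x]`. -/
theorem regularized_stationary_averaged_prediction_identity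
    {X : Type*} [MeasurableSpace X] {d : ℕ}
    (p : Measure (X × ℝ)) [IsProbabilityMeasure p]
    (hy : Integrable (fun q : X × ℝ => q.2) p)
    (Φ : X → EuclideanSpace ℝ (Fin d)) (hΦ_meas : Measurable Φ)
    (hΦ_bdd : ∃ C : ℝ, ∀ x, ‖Φ x‖ ≤ C)
    (a : ℝ → ℝ) (ha : ContDiff ℝ 1 a)
    (γ lam : ℝ) (hγ : 0 < γ) (hlam : 0 < lam)
    (π : Measure (EuclideanSpace ℝ (Fin d))) [IsProbabilityMeasure π]
    (hmoment : Integrable (fun θ : EuclideanSpace ℝ (Fin d) => θ) π)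
    (hgrad_int : Integrable
      (fun q : EuclideanSpace ℝ (Fin d) × (X × ℝ) =>
        (deriv a ⟪Φ q.2.1, q.1⟫ - q.2.2) • Φ q.2.1 + lam • q.1) (π.prod p))
    (hinv : Measure.map
      (fun q : EuclideanSpace ℝ (Fin d) × (X × ℝ) =>
        q.1 - γ • ((deriv a ⟪Φ q.2.1, q.1⟫ - q.2.2) • Φ q.2.1 + lam • q.1)) (π.prod p) = π)
    (μss : X → ℝ) (hμss_meas : Measurable μss)
    (hμss : (fun q : X × ℝ => μss q.1) =ᵐ[p]
      p[(fun q : X × ℝ => q.2) | MeasurableSpace.comap (Prod.fst : X × ℝ → X) inferInstance])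
    (μbb : X → ℝ) (hμbb : ∀ x, μbb x = ∫ θ, deriv a ⟪Φ x, θ⟫ ∂π) :
    ∫ x, (μss x - μbb x) • Φ x ∂(p.map Prod.fst) = lam • ∫ θ, θ ∂π :=
  regularized_stationary_averaged_prediction_identity_general p hy Φ hΦ_meas hΦ_bdd a γ lam hγ π
    hmoment hgrad_int hinv μss hμss_meas hμss μbb hμbb
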